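/- Ivory's identity: for every real x with 0 ≤ x ≤ 1, (1/π)·∫₀^π √(1 + 2√x·cos(2φ) + x) dφ = ∑_{n=0}^∞ ((1/(2n−1))·(1/4ⁿ)·C(2n,n))²·xⁿ. -/

import Mathlib

/-!
The binomial series `P z = ∑ C(1/2, n) zⁿ` converges absolutely on the closed unit disc, since
`C(1/2, n) = ±C(2n, n) / (4ⁿ (2n - 1)) = O(n^(-3/2))`, and the Chu–Vandermonde identity gives
`P z ^ 2 = 1 + z` there. For `z = √x e^{iθ}` the integrand is `|1 + z| = |P z|²`, so its mean
over a period is, by Parseval, `∑ C(1/2, n)² xⁿ`.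
-/

open Real

theorem two_mul_natCast_sub_one_ne_zero (n : ℕ) : (2 * n - 1 : ℝ) ≠ 0 := by
  rw [sub_ne_zero]
  exact_mod_cast (by omega : 2 * n ≠ 1)

theorem Ring.succ_nsmul_choose_succ {R : Type*} [CommRing R] [BinomialRing R] (r : R) (n : ℕ) :
    (n + 1) • Ring.choose r (n + 1) = Ring.choose r n * (r - n) := by
  have := BinomialRing.toIsAddTorsionFree (R := R)
  rw [← nsmul_right_inj (Nat.factorial_ne_zero n), smul_smul, mul_comm, ← Nat.factorial_succ,
    ← Ring.descPochhammer_eq_factorial_smul_choose, descPochhammer_succ_right,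
    Polynomial.smeval_mul, ← smul_mul_assoc, ← Ring.descPochhammer_eq_factorial_smul_choose]
  simp [Polynomial.smeval_sub, Polynomial.smeval_X, Polynomial.smeval_natCast]

theorem Nat.centralBinom_sq_mul_succ_le (n : ℕ) : n.centralBinom ^ 2 * (n + 1) ≤ 16 ^ n := by
  induction n with
  | zero => simp
  | succ n ih =>
    refine Nat.le_of_mul_le_mul_left (c := (n + 1) ^ 3) ?_ (by positivity)
    calc (n + 1) ^ 3 * ((n + 1).centralBinom ^ 2 * (n + 1 + 1))
        = ((n + 1) * (n + 1).centralBinom) ^ 2 * ((n + 1) * (n + 2)) := by ring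
      _ = 4 * (2 * n + 1) ^ 2 * (n + 2) * (n.centralBinom ^ 2 * (n + 1)) := by
          rw [Nat.succ_mul_centralBinom_succ]; ring
      _ ≤ 16 * (n + 1) ^ 3 * 16 ^ n := Nat.mul_le_mul (by nlinarith) ih
      _ = (n + 1) ^ 3 * 16 ^ (n + 1) := by ring

theorem Ring.choose_half (n : ℕ) :
    Ring.choose (1 / 2 : ℝ) n = (-1) ^ (n + 1) * n.centralBinom / (4 ^ n * (2 * n - 1)) := by
  induction n with
  | zero => norm_num [Ring.choose_zero_right]
  | succ n ih =>
    have hn : (n + 1 : ℝ) ≠ 0 := by positivity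
    have hodd := two_mul_natCast_sub_one_ne_zero n
    have hodd' : (2 * (n + 1) - 1 : ℝ) ≠ 0 := by
      exact_mod_cast two_mul_natCast_sub_one_ne_zero (n + 1)
    have hrec : Ring.choose (1 / 2 : ℝ) (n + 1) =
        Ring.choose (1 / 2 : ℝ) n * (1 / 2 - n) / (n + 1) := by
      rw [eq_div_iff hn, ← Ring.succ_nsmul_choose_succ, nsmul_eq_mul]; push_cast; ring
    have hcb : ((n + 1).centralBinom : ℝ) = 2 * (2 * n + 1) * n.centralBinom / (n + 1) := by
      rw [eq_div_iff hn, mul_comm]; exact_mod_cast Nat.succ_mul_centralBinom_succ n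
    rw [hrec, ih, hcb]
    push_cast
    field_simp
    ring

theorem Ring.choose_half_sq_mul_cube_le_one (n : ℕ) :
    Ring.choose (1 / 2 : ℝ) n ^ 2 * n ^ 3 ≤ 1 := by
  have hodd := two_mul_natCast_sub_one_ne_zero n
  have hcb : (n.centralBinom : ℝ) ^ 2 * (n + 1) ≤ 16 ^ n := by
    exact_mod_cast Nat.centralBinom_sq_mul_succ_le n
  have hcube : (n : ℝ) ^ 3 ≤ (n + 1) * (2 * n - 1) ^ 2 := by
    rcases Nat.eq_zero_or_pos n with rfl | hn
    · norm_num
    · have : (1 : ℝ) ≤ n := by exact_mod_cast hn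
      nlinarith
  rw [Ring.choose_half, div_pow, mul_pow, mul_pow, ← pow_mul, pow_mul', neg_one_sq, one_pow,
    one_mul, ← pow_mul, mul_comm n, pow_mul, show (4 : ℝ) ^ 2 = 16 by norm_num,
    div_mul_eq_mul_div, div_le_one (by positivity)]
  calc (n.centralBinom : ℝ) ^ 2 * n ^ 3
      ≤ (n.centralBinom : ℝ) ^ 2 * ((n + 1) * (2 * n - 1) ^ 2) := by gcongr
    _ = (n.centralBinom : ℝ) ^ 2 * (n + 1) * (2 * n - 1) ^ 2 := by ring
    _ ≤ 16 ^ n * (2 * n - 1) ^ 2 := by gcongr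

theorem Ring.summable_abs_choose_half : Summable fun n : ℕ => |Ring.choose (1 / 2 : ℝ) n| := by
  refine Summable.of_norm_bounded_eventually_nat (Real.summable_nat_rpow_inv.mpr
    (by norm_num : (1 : ℝ) < 3 / 2)) (Filter.eventually_atTop.mpr ⟨1, fun n hn => ?_⟩)
  have hpos : (0 : ℝ) < (n : ℝ) ^ (3 / 2 : ℝ) := by positivity
  rw [norm_abs_eq_norm, Real.norm_eq_abs, ← one_div, le_div_iff₀ hpos]
  refine (pow_le_one_iff_of_nonneg (by positivity) two_ne_zero).mp ?_
  rw [mul_pow, sq_abs, ← Real.rpow_mul_natCast n.cast_nonneg]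
  norm_num
  exact_mod_cast Ring.choose_half_sq_mul_cube_le_one n

theorem Ring.tsum_choose_mul_pow_mul_tsum {A : Type*} [NormedCommRing A] [CompleteSpace A]
    [BinomialRing A] {r s z : A} (hr : Summable fun n => ‖Ring.choose r n * z ^ n‖)
    (hs : Summable fun n => ‖Ring.choose s n * z ^ n‖) :
    (∑' n, Ring.choose r n * z ^ n) * ∑' n, Ring.choose s n * z ^ n =
      ∑' n, Ring.choose (r + s) n * z ^ n := by
  rw [tsum_mul_tsum_eq_tsum_sum_antidiagonal_of_summable_norm hr hs]
  refine tsum_congr fun n => ?_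
  rw [Ring.add_choose_eq n (Commute.all r s), Finset.sum_mul]
  refine Finset.sum_congr rfl fun ij hij => ?_
  rw [← Finset.HasAntidiagonal.mem_antidiagonal.mp hij, pow_add]
  ring

section

open Complex ComplexConjugate

theorem Complex.norm_choose_half (n : ℕ) :
    ‖Ring.choose (1 / 2 : ℂ) n‖ = |Ring.choose (1 / 2 : ℝ) n| := by
  rw [← Real.norm_eq_abs, ← norm_real, ofReal_choose]
  norm_num

theorem Complex.summable_norm_choose_half_mul_pow {z : ℂ} (hz : ‖z‖ ≤ 1) :
    Summable fun n => ‖Ring.choose (1 / 2 : ℂ) n * z ^ n‖ := by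
  refine Ring.summable_abs_choose_half.of_nonneg_of_le (fun _ => norm_nonneg _) fun n => ?_
  rw [norm_mul, norm_pow, norm_choose_half]
  exact mul_le_of_le_one_right (abs_nonneg _) (pow_le_one₀ (norm_nonneg _) hz)

theorem Complex.tsum_choose_half_mul_pow_sq {z : ℂ} (hz : ‖z‖ ≤ 1) :
    (∑' n, Ring.choose (1 / 2 : ℂ) n * z ^ n) ^ 2 = 1 + z := by
  have hsum := summable_norm_choose_half_mul_pow hz
  rw [sq, Ring.tsum_choose_mul_pow_mul_tsum hsum hsum, add_halves,
    tsum_eq_sum (s := Finset.range 2)]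
  · simp [Finset.sum_range_succ]
  · intro n hn
    rw [← Nat.cast_one, Ring.choose_natCast, Nat.choose_eq_zero_of_lt (by simp at hn; omega)]
    simp

theorem integral_exp_int_mul_mul_I (k : ℤ) :
    ∫ θ in (0 : ℝ)..2 * π, exp (k * θ * I) = if k = 0 then (2 * π : ℂ) else 0 := by
  split_ifs with hk
  · simp [hk]
  · have hc : (k * I : ℂ) ≠ 0 := mul_ne_zero (by exact_mod_cast hk) I_ne_zero
    simp_rw [mul_right_comm _ _ I]
    rw [integral_exp_mul_complex hc]
    push_cast
    rw [show (k : ℂ) * I * (2 * π) = k * (2 * π * I) by ring, exp_int_mul_two_pi_mul_I]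
    simp

theorem integral_norm_tsum_mul_exp_sq {c : ℕ → ℂ} (hc : Summable fun n => ‖c n‖) :
    ∫ θ in (0 : ℝ)..2 * π, ‖∑' n, c n * exp (n * θ * I)‖ ^ 2 = 2 * π * ∑' n, ‖c n‖ ^ 2 := by
  let F : ℕ × ℕ → C(ℝ, ℂ) := fun p =>
    ⟨fun θ => c p.1 * conj (c p.2) * exp (((p.1 - p.2 : ℤ) : ℂ) * θ * I), by fun_prop⟩
  have hF_norm (p : ℕ × ℕ) (θ : ℝ) : ‖F p θ‖ = ‖c p.1‖ * ‖c p.2‖ := by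
    simp [F, norm_exp]
  have hF_summable : Summable fun p =>
      ‖(F p).restrict (⟨Set.uIcc 0 (2 * π), isCompact_uIcc⟩ : TopologicalSpace.Compacts ℝ)‖ := by
    refine (summable_mul_of_summable_norm (f := fun n => ‖c n‖) (g := fun n => ‖c n‖)
      (by simpa using hc) (by simpa using hc)).of_nonneg_of_le (fun _ => norm_nonneg _)
      fun p => ?_
    exact (ContinuousMap.norm_le _ (by positivity)).mpr fun θ => (hF_norm p θ).le
  have hF_tsum (θ : ℝ) : ((‖∑' n, c n * exp (n * θ * I)‖ ^ 2 : ℝ) : ℂ) = ∑' p, F p θ := by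
    have hs : Summable fun n => ‖c n * exp (n * θ * I)‖ := by
      simpa [norm_exp] using hc
    rw [ofReal_pow, ← mul_conj', conj_tsum, tsum_mul_tsum_of_summable_norm hs
      (by simpa using hs)]
    refine tsum_congr fun p => ?_
    simp only [F, ContinuousMap.coe_mk, map_mul, ← exp_conj, conj_natCast, conj_ofReal, conj_I]
    rw [mul_mul_mul_comm, ← Complex.exp_add]
    push_cast
    ring_nf
  have hF_integral (p : ℕ × ℕ) : ∫ θ in (0 : ℝ)..2 * π, F p θ =
      if p.1 = p.2 then ((2 * π * ‖c p.1‖ ^ 2 : ℝ) : ℂ) else 0 := by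
    simp only [F, ContinuousMap.coe_mk, intervalIntegral.integral_const_mul,
      integral_exp_int_mul_mul_I, sub_eq_zero, Nat.cast_inj]
    split_ifs with h
    · rw [h, mul_conj']; push_cast; ring
    · simp
  have hdiag : Function.Injective fun n : ℕ => (n, n) := fun _ _ h => (Prod.mk.inj h).1
  apply ofReal_injective
  rw [← intervalIntegral.integral_ofReal, intervalIntegral.integral_congr fun θ _ => hF_tsum θ,
    ← intervalIntegral.tsum_intervalIntegral_eq_of_summable_norm hF_summable,
    tsum_congr hF_integral, ← hdiag.tsum_eq]
  · simp [ofReal_tsum, tsum_mul_left]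
  · intro p hp
    by_cases h : p.1 = p.2
    · exact ⟨p.1, Prod.ext rfl h⟩
    · simp [h] at hp

theorem Complex.norm_one_add_mul_exp_mul_I (y θ : ℝ) :
    ‖1 + y * exp (θ * I)‖ = √(1 + 2 * y * Real.cos θ + y ^ 2) := by
  rw [norm_eq_sqrt_sq_add_sq]
  congr 1
  simp [exp_ofReal_mul_I_re, exp_ofReal_mul_I_im]
  linear_combination y ^ 2 * Real.sin_sq_add_cos_sq θ

theorem integral_sqrt_one_add_two_mul_cos_add_sq {y : ℝ} (hy0 : 0 ≤ y) (hy1 : y ≤ 1) :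
    ∫ θ in (0 : ℝ)..2 * π, √(1 + 2 * y * Real.cos θ + y ^ 2) =
      2 * π * ∑' n, Ring.choose (1 / 2 : ℝ) n ^ 2 * y ^ (2 * n) := by
  have hz (θ : ℝ) : ‖(y : ℂ) * exp (θ * I)‖ ≤ 1 := by
    simpa [norm_exp_ofReal_mul_I, abs_of_nonneg hy0] using hy1
  have hpow (θ : ℝ) (n : ℕ) : Ring.choose (1 / 2 : ℂ) n * ((y : ℂ) * exp (θ * I)) ^ n =
      Ring.choose (1 / 2 : ℂ) n * (y : ℂ) ^ n * exp (n * θ * I) := by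
    rw [mul_pow, ← Complex.exp_nat_mul]
    ring_nf
  have hintegrand (θ : ℝ) : √(1 + 2 * y * Real.cos θ + y ^ 2) =
      ‖∑' n, Ring.choose (1 / 2 : ℂ) n * (y : ℂ) ^ n * exp (n * θ * I)‖ ^ 2 := by
    rw [← norm_one_add_mul_exp_mul_I, ← tsum_choose_half_mul_pow_sq (hz θ), norm_pow]
    simp_rw [hpow]
  have hsummable : Summable fun n => ‖Ring.choose (1 / 2 : ℂ) n * (y : ℂ) ^ n‖ :=
    summable_norm_choose_half_mul_pow (by simpa [abs_of_nonneg hy0] using hy1)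
  simp_rw [hintegrand, integral_norm_tsum_mul_exp_sq hsummable, norm_mul, norm_pow,
    norm_choose_half, norm_real, Real.norm_eq_abs, abs_of_nonneg hy0, mul_pow, sq_abs, pow_mul']

end

theorem ivory_identity (x : ℝ) (hx0 : 0 ≤ x) (hx1 : x ≤ 1) :
    (1 / Real.pi) *
        ∫ φ in (0:ℝ)..Real.pi, Real.sqrt (1 + 2 * Real.sqrt x * Real.cos (2 * φ) + x) =
      ∑' n : ℕ, ((1 / (2 * (n : ℝ) - 1)) * (1 / 4 ^ n) * (Nat.choose (2 * n) n)) ^ 2 * x ^ n := by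
  have hx : √x ^ 2 = x := Real.sq_sqrt hx0
  have hmean := integral_sqrt_one_add_two_mul_cos_add_sq (Real.sqrt_nonneg x)
    (Real.sqrt_le_one.mpr hx1)
  rw [hx] at hmean
  rw [intervalIntegral.integral_comp_mul_left (fun θ => √(1 + 2 * √x * Real.cos θ + x))
      two_ne_zero, mul_zero, hmean, smul_eq_mul, ← mul_assoc, ← mul_assoc,
    show 1 / π * 2⁻¹ * (2 * π) = 1 by field_simp, one_mul]
  refine tsum_congr fun n => ?_
  rw [pow_mul, hx, Ring.choose_half, ← Nat.centralBinom_eq_two_mul_choose, div_pow, mul_pow,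
    ← pow_mul, pow_mul', neg_one_sq, one_pow, one_mul, div_eq_mul_inv, ← inv_pow, mul_inv]
  ring
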